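/- For all s, t ∈ F \ F_{q^2} with s ∉ {t, t^(q^2)}: b(w_s, w_t) = 0 if and only if ν(s,t) ∈ F_q, i.e., if and only if ν(s,t)^q = ν(s,t). -/
import Mathlib


/-- The Plücker coordinate vector `w_t = κ(m_𝐭)` in `F^6`. -/
def wvecPW {F : Type*} [Field F] (q : ℕ) (t : F) : Fin 6 → F :=
  ![t ^ q + t ^ q ^ 3,
    t + t ^ q ^ 2,
    t ^ (1 + q) + t ^ (q ^ 2 + q ^ 3),
    t ^ (1 + q ^ 3) + t ^ (q + q ^ 2),
    t ^ (1 + q + q ^ 3) + t ^ (q + q ^ 2 + q ^ 3),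
    t ^ (1 + q + q ^ 2) + t ^ (1 + q ^ 2 + q ^ 3)]

/-- The bilinear form `b(X,Y) = X₁Y₆ + X₆Y₁ + X₂Y₅ + X₅Y₂ + X₃Y₄ + X₄Y₃` on `F^6`. -/
def b6PW {F : Type*} [Field F] (X Y : Fin 6 → F) : F :=
  X 0 * Y 5 + X 5 * Y 0 + X 1 * Y 4 + X 4 * Y 1 + X 2 * Y 3 + X 3 * Y 2

/-- ν(s,t) = ((s+t^{q²})(s^{q²}+t))/((s+s^{q²})(t+t^{q²})). -/
def nuPW {F : Type*} [Field F] (q : ℕ) (s t : F) : F :=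
  ((s + t ^ q ^ 2) * (s ^ q ^ 2 + t)) / ((s + s ^ q ^ 2) * (t + t ^ q ^ 2))

theorem stmt_17 (h q : ℕ) (hh : 1 ≤ h) (hq : q = 2 ^ h)
    (F : Type*) [Field F] [Fintype F] (hF : Fintype.card F = q ^ 4)
    (s t : F) (hs : s ^ q ^ 2 ≠ s) (ht : t ^ q ^ 2 ≠ t)
    (h1 : s ≠ t) (h2 : s ≠ t ^ q ^ 2) :
    b6PW (wvecPW q s) (wvecPW q t) = 0 ↔ (nuPW q s t) ^ q = nuPW q s t := by
  -- characteristic 2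
  have htwo : (2 : F) = 0 := by
    have hc := FiniteField.cast_card_eq_zero F
    rw [hF, hq] at hc
    have hc2 : (2 : F) ^ (h * 4) = 0 := by
      push_cast at hc
      rw [← pow_mul] at hc
      exact hc
    have hne : h * 4 ≠ 0 := by positivity
    exact pow_eq_zero_iff hne |>.mp hc2
  haveI : Fact (Nat.Prime 2) := ⟨Nat.prime_two⟩
  have hring : ringChar F = 2 := CharP.ringChar_of_prime_eq_zero Nat.prime_two htwo
  haveI hcp : CharP F 2 := hring ▸ ringChar.charP F
  have hfrob : ∀ x y : F, (x + y) ^ q = x ^ q + y ^ q := by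
    intro x y
    rw [hq]
    exact add_pow_char_pow x y 2 h
  have es : (s ^ q ^ 2) ^ q = s ^ q ^ 3 := by
    rw [← pow_mul, ← pow_succ]
  have et : (t ^ q ^ 2) ^ q = t ^ q ^ 3 := by
    rw [← pow_mul, ← pow_succ]
  -- nonvanishing denominators
  have hDs : s + s ^ q ^ 2 ≠ 0 := by
    intro hz
    apply hs
    linear_combination hz - s * htwo
  have hDt : t + t ^ q ^ 2 ≠ 0 := by
    intro hz
    apply ht
    linear_combination hz - t * htwo
  have hDs' : s ^ q + s ^ q ^ 3 ≠ 0 := by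
    have := pow_ne_zero q hDs
    rwa [hfrob, es] at this
  have hDt' : t ^ q + t ^ q ^ 3 ≠ 0 := by
    have := pow_ne_zero q hDt
    rwa [hfrob, et] at this
  have hD : (s + s ^ q ^ 2) * (t + t ^ q ^ 2) ≠ 0 := mul_ne_zero hDs hDt
  have hD' : (s ^ q + s ^ q ^ 3) * (t ^ q + t ^ q ^ 3) ≠ 0 := mul_ne_zero hDs' hDt'
  -- compute ν^q
  have hnuq : nuPW q s t ^ q =
      ((s ^ q + t ^ q ^ 3) * (s ^ q ^ 3 + t ^ q)) /
        ((s ^ q + s ^ q ^ 3) * (t ^ q + t ^ q ^ 3)) := by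
    unfold nuPW
    rw [div_pow, mul_pow, mul_pow, hfrob s (t ^ q ^ 2), hfrob (s ^ q ^ 2) t,
      hfrob s (s ^ q ^ 2), hfrob t (t ^ q ^ 2), es, et]
  -- key polynomial identity in characteristic 2
  have hb : b6PW (wvecPW q s) (wvecPW q t) =
      (s ^ q + t ^ q ^ 3) * (s ^ q ^ 3 + t ^ q) * ((s + s ^ q ^ 2) * (t + t ^ q ^ 2)) +
      (s + t ^ q ^ 2) * (s ^ q ^ 2 + t) * ((s ^ q + s ^ q ^ 3) * (t ^ q + t ^ q ^ 3)) := by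
    have e : b6PW (wvecPW q s) (wvecPW q t) =
        (s ^ q + s ^ q ^ 3) * (t ^ (1 + q + q ^ 2) + t ^ (1 + q ^ 2 + q ^ 3)) +
        (s ^ (1 + q + q ^ 2) + s ^ (1 + q ^ 2 + q ^ 3)) * (t ^ q + t ^ q ^ 3) +
        (s + s ^ q ^ 2) * (t ^ (1 + q + q ^ 3) + t ^ (q + q ^ 2 + q ^ 3)) +
        (s ^ (1 + q + q ^ 3) + s ^ (q + q ^ 2 + q ^ 3)) * (t + t ^ q ^ 2) +
        (s ^ (1 + q) + s ^ (q ^ 2 + q ^ 3)) * (t ^ (1 + q ^ 3) + t ^ (q + q ^ 2)) +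
        (s ^ (1 + q ^ 3) + s ^ (q + q ^ 2)) * (t ^ (1 + q) + t ^ (q ^ 2 + q ^ 3)) := rfl
    rw [e]
    simp only [pow_add, pow_one]
    linear_combination (-(s ^ q ^ 2) * (s ^ q ^ 3) * (t ^ q ^ 2) * (t ^ q ^ 3)
      - (s ^ q) * (s ^ q ^ 2) * (t ^ q) * (t ^ q ^ 2)
      - s * (s ^ q ^ 3) * t * (t ^ q ^ 3) - s * (s ^ q) * t * (t ^ q)) * htwo
  rw [hb, hnuq]
  unfold nuPW
  rw [div_eq_div_iff hD' hD]
  constructor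
  · intro hz
    linear_combination hz - ((s + t ^ q ^ 2) * (s ^ q ^ 2 + t) *
      ((s ^ q + s ^ q ^ 3) * (t ^ q + t ^ q ^ 3))) * htwo
  · intro hz
    linear_combination hz + ((s + t ^ q ^ 2) * (s ^ q ^ 2 + t) *
      ((s ^ q + s ^ q ^ 3) * (t ^ q + t ^ q ^ 3))) * htwo
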